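/- arXiv:2503.08246 — 2 statements merged into one kernel-verified Lean document; each statement's English description precedes it below -/
import Mathlib

section
/- For real numbers x, y and ε > 0, if η is chosen uniformly at random from [0, 2ε], then the probability that ⌊(x + η)/(2ε)⌋ ≠ ⌊(y + η)/(2ε)⌋ is at most |x − y|/(2ε). -/
/-!
For `x ≤ y` the floors of `(x + η) / c` and `(y + η) / c` differ exactly when some multiple
`k * c` lies in `(x + η, y + η]`. For `η ∈ [0, c]` only the two multiples of `c` just above `x`
can occur, which confines `η` to two intervals whose lengths add up to `y - x`.
-/

open MeasureTheory Set

lemma exists_int_mul_mem_Ioc_of_floor_div_ne {c u v : ℝ} (hc : 0 < c) (huv : u ≤ v)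
    (h : ⌊u / c⌋ ≠ ⌊v / c⌋) : ∃ k : ℤ, u < k * c ∧ k * c ≤ v := by
  have hlt : ⌊u / c⌋ < ⌊v / c⌋ := (Int.floor_mono (by gcongr)).lt_of_ne h
  exact ⟨⌊v / c⌋, (div_lt_iff₀ hc).mp (Int.floor_lt.mp hlt), (le_div_iff₀ hc).mp (Int.floor_le _)⟩

lemma floor_div_ne_inter_Icc_subset {c x y : ℝ} {m : ℤ} (hc : 0 < c) (hxy : x ≤ y)
    (hyx : y - x ≤ c) (hm : m * c ≤ x) (hm' : x < (m + 1) * c) :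
    {η | ⌊(x + η) / c⌋ ≠ ⌊(y + η) / c⌋} ∩ Icc 0 c ⊆
      Ico (max 0 ((m + 1) * c - y)) ((m + 1) * c - x) ∪ Icc ((m + 1) * c - y + c) c := by
  rintro η ⟨hne, hη₀, hηc⟩
  obtain ⟨k, hxk, hky⟩ := exists_int_mul_mem_Ioc_of_floor_div_ne hc (by linarith) hne
  have hmk : m < k := by
    have : (m : ℝ) * c < k * c := by linarith
    exact_mod_cast lt_of_mul_lt_mul_right this hc.le
  have hkm : k < m + 3 := by
    have : (k : ℝ) * c < (m + 3) * c := by linarith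
    exact_mod_cast lt_of_mul_lt_mul_right this hc.le
  obtain rfl | rfl : k = m + 1 ∨ k = m + 2 := by omega
  · push_cast at hxk hky
    exact Or.inl ⟨max_le hη₀ (by linarith), by linarith⟩
  · push_cast at hxk hky
    exact Or.inr ⟨by linarith, hηc⟩

lemma volume_Ico_max_union_Icc_le {s t c : ℝ} (ht : 0 ≤ t) :
    volume (Ico (max 0 s) t ∪ Icc (s + c) c) ≤ ENNReal.ofReal (t - s) :=
  calc volume (Ico (max 0 s) t ∪ Icc (s + c) c)
      ≤ volume (Ico (max 0 s) t) + volume (Icc (s + c) c) := measure_union_le _ _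
    _ = ENNReal.ofReal (t - max 0 s) + ENNReal.ofReal (-s) := by
      rw [Real.volume_Ico, Real.volume_Icc, sub_add_cancel_right]
    _ = ENNReal.ofReal (t - s) := by
      rcases le_total 0 s with hs | hs
      · rw [max_eq_right hs, ENNReal.ofReal_of_nonpos (neg_nonpos.mpr hs), add_zero]
      · rw [max_eq_left hs, ← ENNReal.ofReal_add (by linarith) (by linarith), sub_zero,
          ← sub_eq_add_neg]

lemma volume_floor_div_ne_inter_Icc_le {c x y : ℝ} (hc : 0 < c) (hxy : x ≤ y)
    (hyx : y - x ≤ c) :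
    volume ({η | ⌊(x + η) / c⌋ ≠ ⌊(y + η) / c⌋} ∩ Icc 0 c) ≤ ENNReal.ofReal (y - x) := by
  set m := ⌊x / c⌋
  have hm : m * c ≤ x := (le_div_iff₀ hc).mp (Int.floor_le _)
  have hm' : x < (m + 1) * c := (div_lt_iff₀ hc).mp (Int.lt_floor_add_one _)
  calc volume ({η | ⌊(x + η) / c⌋ ≠ ⌊(y + η) / c⌋} ∩ Icc 0 c)
      ≤ volume (Ico (max 0 ((m + 1) * c - y)) ((m + 1) * c - x) ∪
          Icc ((m + 1) * c - y + c) c) :=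
        measure_mono (floor_div_ne_inter_Icc_subset hc hxy hyx hm hm')
    _ ≤ ENNReal.ofReal ((m + 1) * c - x - ((m + 1) * c - y)) :=
        volume_Ico_max_union_Icc_le (by linarith)
    _ = ENNReal.ofReal (y - x) := by ring_nf

lemma uniform_Icc_floor_div_ne_le_of_le {c x y : ℝ} (hc : 0 < c) (hxy : x ≤ y) :
    ((ENNReal.ofReal c)⁻¹ • volume.restrict (Icc 0 c)) {η | ⌊(x + η) / c⌋ ≠ ⌊(y + η) / c⌋}
      ≤ ENNReal.ofReal ((y - x) / c) := by
  rw [Measure.smul_apply, smul_eq_mul, Measure.restrict_apply' measurableSet_Icc]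
  rcases le_total (y - x) c with hyx | hyx
  · calc (ENNReal.ofReal c)⁻¹ * volume ({η | ⌊(x + η) / c⌋ ≠ ⌊(y + η) / c⌋} ∩ Icc 0 c)
        ≤ (ENNReal.ofReal c)⁻¹ * ENNReal.ofReal (y - x) := by
          gcongr
          exact volume_floor_div_ne_inter_Icc_le hc hxy hyx
      _ = ENNReal.ofReal ((y - x) / c) := by
          rw [ENNReal.ofReal_div_of_pos hc, ENNReal.div_eq_inv_mul]
  · calc (ENNReal.ofReal c)⁻¹ * volume ({η | ⌊(x + η) / c⌋ ≠ ⌊(y + η) / c⌋} ∩ Icc 0 c)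
        ≤ (ENNReal.ofReal c)⁻¹ * volume (Icc 0 c) := by
          gcongr
          exact inter_subset_right
      _ = 1 := by
          rw [Real.volume_Icc, sub_zero]
          exact ENNReal.inv_mul_cancel (by simpa using hc) ENNReal.ofReal_ne_top
      _ ≤ ENNReal.ofReal ((y - x) / c) := by
          rw [ENNReal.one_le_ofReal, le_div_iff₀ hc]
          linarith

lemma uniform_Icc_floor_div_ne_le {c : ℝ} (hc : 0 < c) (x y : ℝ) :
    ((ENNReal.ofReal c)⁻¹ • volume.restrict (Icc 0 c)) {η | ⌊(x + η) / c⌋ ≠ ⌊(y + η) / c⌋}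
      ≤ ENNReal.ofReal (|x - y| / c) := by
  rcases le_total x y with hxy | hyx
  · rw [abs_sub_comm, abs_of_nonneg (sub_nonneg.mpr hxy)]
    exact uniform_Icc_floor_div_ne_le_of_le hc hxy
  · simp_rw [abs_of_nonneg (sub_nonneg.mpr hyx), ne_comm (a := ⌊(x + _) / c⌋)]
    exact uniform_Icc_floor_div_ne_le_of_le hc hyx

/-- Single-coordinate collision bound: for η uniform on [0, 2ε], the probability
that ⌊(x+η)/(2ε)⌋ ≠ ⌊(y+η)/(2ε)⌋ is at most |x - y|/(2ε). -/
theorem stmt_0 (x y ε : ℝ) (hε : 0 < ε) :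
    ((ENNReal.ofReal (2 * ε))⁻¹ • (volume.restrict (Set.Icc (0:ℝ) (2 * ε))))
      {η : ℝ | ⌊(x + η) / (2 * ε)⌋ ≠ ⌊(y + η) / (2 * ε)⌋}
      ≤ ENNReal.ofReal (|x - y| / (2 * ε)) :=
  uniform_Icc_floor_div_ne_le (by positivity) x y
end

section
/- For real x, y and ε > 0 with y ≥ x, and η uniform on [0, 2ε], the set of η ∈ [0, 2ε] for which ⌊(x + η)/(2ε)⌋ ≠ ⌊(y + η)/(2ε)⌋ has Lebesgue measure at most (y − x) when y − x ≤ 2ε. -/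
open MeasureTheory Set

/-!
The set of shifts `η` for which `x + η` and `y + η` land in different cells of the grid `c ℤ`
is invariant under translation by `c ℤ`, so its measure in `[0, c]` equals its measure in any
period `(t, t + c]`. In the period `(-x, c - x]` the point `x + η` lies in the first cell `(0, c]`,
and the two points are separated only if `y + η` has reached `c`, i.e. `η ∈ [c - y, c - x]`.
-/

def separatingShifts (c x y : ℝ) : Set ℝ := {η | ⌊(x + η) / c⌋ ≠ ⌊(y + η) / c⌋}

lemma measurableSet_separatingShifts (c x y : ℝ) : MeasurableSet (separatingShifts c x y) :=
  (measurableSet_eq_fun (by fun_prop) (by fun_prop)).compl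

lemma floor_add_zsmul_div {c : ℝ} (hc : c ≠ 0) (n : ℤ) (u : ℝ) :
    ⌊(u + n • c) / c⌋ = ⌊u / c⌋ + n := by
  rw [zsmul_eq_mul, add_div, mul_div_cancel_right₀ _ hc, Int.floor_add_intCast]

lemma vadd_preimage_separatingShifts {c : ℝ} (hc : c ≠ 0) (x y : ℝ)
    (g : AddSubgroup.zmultiples c) :
    (g +ᵥ ·) ⁻¹' separatingShifts c x y = separatingShifts c x y := by
  obtain ⟨_, n, rfl⟩ := g
  ext η
  simp only [separatingShifts, mem_preimage, mem_ofPred_eq, AddSubgroup.vadd_def, vadd_eq_add]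
  rw [add_left_comm x, add_left_comm y, add_comm _ (x + η), add_comm _ (y + η),
    floor_add_zsmul_div hc, floor_add_zsmul_div hc, ne_eq, add_left_inj]

lemma separatingShifts_inter_Ioc_subset {c x y : ℝ} (hxy : x ≤ y) :
    separatingShifts c x y ∩ Ioc (-x) (-x + c) ⊆ Icc (c - y) (c - x) := by
  rintro η ⟨hsep, hηx, hηc⟩
  refine ⟨?_, by linarith⟩
  by_contra! hηy
  have hc : 0 < c := by linarith
  refine hsep ?_
  rw [Int.floor_eq_zero_iff.mpr, Int.floor_eq_zero_iff.mpr] <;>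
    exact ⟨div_nonneg (by linarith) hc.le, (div_lt_one hc).mpr (by linarith)⟩

lemma volume_separatingShifts_inter_Icc_le {c x y : ℝ} (hc : 0 < c) (hxy : x ≤ y) :
    volume (separatingShifts c x y ∩ Icc 0 c) ≤ ENNReal.ofReal (y - x) :=
  calc volume (separatingShifts c x y ∩ Icc 0 c)
      = volume (separatingShifts c x y ∩ Ioc 0 (0 + c)) := by
        rw [zero_add]; exact measure_congr (ae_eq_refl _ |>.inter Ioc_ae_eq_Icc.symm)
    _ = volume (separatingShifts c x y ∩ Ioc (-x) (-x + c)) :=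
        (isAddFundamentalDomain_Ioc hc 0).measure_set_eq (isAddFundamentalDomain_Ioc hc (-x))
          (measurableSet_separatingShifts c x y) (vadd_preimage_separatingShifts hc.ne' x y)
    _ ≤ volume (Icc (c - y) (c - x)) := measure_mono (separatingShifts_inter_Ioc_subset hxy)
    _ = ENNReal.ofReal (y - x) := by rw [Real.volume_Icc, sub_sub_sub_cancel_left]

theorem stmt_5_general (x y ε : ℝ) (hε : 0 < ε) (hxy : x ≤ y) :
    volume {η : ℝ | η ∈ Set.Icc (0:ℝ) (2 * ε) ∧
        ⌊(x + η) / (2 * ε)⌋ ≠ ⌊(y + η) / (2 * ε)⌋}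
      ≤ ENNReal.ofReal (y - x) := by
  rw [ofPred_and, ofPred_mem_eq, inter_comm]
  exact volume_separatingShifts_inter_Icc_le (by positivity) hxy

/-- The set of shifts η ∈ [0, 2ε] separating x and y under the shifted-grid
hash has Lebesgue measure at most y - x, when 0 ≤ y - x ≤ 2ε. -/
theorem stmt_5 (x y ε : ℝ) (hε : 0 < ε) (hxy : x ≤ y) (hclose : y - x ≤ 2 * ε) :
    volume {η : ℝ | η ∈ Set.Icc (0:ℝ) (2 * ε) ∧
        ⌊(x + η) / (2 * ε)⌋ ≠ ⌊(y + η) / (2 * ε)⌋}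
      ≤ ENNReal.ofReal (y - x) :=
  stmt_5_general x y ε hε hxy
end
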